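/- For every real b > 0 and every positive integer p, Σ_{i=1}^p Σ_{j=i}^∞ 1/(2j+b)^2 = (1/4) ψ(b/2 + p + 1) - (1/4) ψ(b/2 + 1) - (b/8) ψ'(b/2 + 1) + (p/4 + b/8) ψ'(b/2 + p + 1). -/

import Mathlib

/-!
Termwise differentiation of the Weierstrass series
`log Γ(x) = -log x - γ x + ∑ₘ (x/(m+1) - log (1 + x/(m+1)))`, whose partial sums differ from
`Real.BohrMollerup.logGammaSeq` by `log x + x (Hₙ - log n)`, gives
`ψ(x) = -γ - 1/x + ∑ₘ (1/(m+1) - 1/(x+m+1))` and then `ψ'(x) = ∑ₖ 1/(x+k)²`.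
Each inner sum is `ψ'(b/2 + i)/4`, and the sum over `i` telescopes (summation by parts) using
`ψ(y+1) = ψ(y) + 1/y` and `ψ'(y+1) = ψ'(y) - 1/y²`.
-/

/-- The digamma function `ψ(x) = Γ'(x)/Γ(x)`, as the derivative of `log ∘ Γ`. -/
noncomputable def digamma (x : ℝ) : ℝ :=
  deriv (fun y => Real.log (Real.Gamma y)) x

open Real Finset
local notation "γ" => eulerMascheroniConstant

lemma sub_log_one_add_mem_Icc {u : ℝ} (hu : 0 ≤ u) : u - log (1 + u) ∈ Set.Icc 0 (u ^ 2) := by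
  have hupper := log_le_sub_one_of_pos (by positivity : 0 < 1 + u)
  have hlower := one_sub_inv_le_log_of_pos (by positivity : 0 < 1 + u)
  have hinv : (1 + u)⁻¹ ≤ 1 - u + u ^ 2 := by
    rw [inv_le_iff_one_le_mul₀ (by positivity)]
    nlinarith
  constructor <;> linarith

noncomputable def weierstrassTerm (m : ℕ) (x : ℝ) : ℝ :=
  x / (m + 1) - (log (x + (m + 1)) - log (m + 1))

lemma weierstrassTerm_mem_Icc {x : ℝ} (hx : 0 ≤ x) (m : ℕ) :
    weierstrassTerm m x ∈ Set.Icc 0 (x ^ 2 * ((m + 1 : ℝ) ^ 2)⁻¹) := by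
  have hlog : log (x + (m + 1)) - log (m + 1) = log (1 + x / (m + 1)) := by
    rw [← log_div (by positivity) (by positivity), add_div, div_self (by positivity), add_comm]
  rw [weierstrassTerm, hlog, ← inv_pow, ← mul_pow]
  exact sub_log_one_add_mem_Icc (by positivity)

lemma summable_inv_nat_add_one_sq : Summable fun m : ℕ => ((m + 1 : ℝ) ^ 2)⁻¹ := by
  have := (summable_nat_add_iff 1).mpr (Real.summable_one_div_nat_pow.mpr one_lt_two)
  simpa using this

lemma summable_weierstrassTerm {x : ℝ} (hx : 0 ≤ x) :
    Summable fun m => weierstrassTerm m x :=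
  (summable_inv_nat_add_one_sq.mul_left (x ^ 2)).of_nonneg_of_le
    (fun m => (weierstrassTerm_mem_Icc hx m).1) (fun m => (weierstrassTerm_mem_Icc hx m).2)

lemma sum_range_weierstrassTerm (x : ℝ) (n : ℕ) :
    ∑ m ∈ range n, weierstrassTerm m x
      = BohrMollerup.logGammaSeq x n + log x + x * (harmonic n - log n) := by
  have hfact : log (n.factorial : ℝ) = ∑ m ∈ range n, log (m + 1) := by
    rw [← prod_range_add_one_eq_factorial, Nat.cast_prod, log_prod (fun m _ => by positivity)]
    push_cast; rfl
  simp only [weierstrassTerm, BohrMollerup.logGammaSeq, sum_sub_distrib, hfact,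
    sum_range_succ', harmonic]
  push_cast
  rw [mul_sub, mul_sum, add_zero]
  simp only [div_eq_mul_inv]
  ring

lemma hasSum_weierstrassTerm {x : ℝ} (hx : 0 < x) :
    HasSum (fun m => weierstrassTerm m x) (log (Gamma x) + log x + γ * x) := by
  rw [(summable_weierstrassTerm hx.le).hasSum_iff_tendsto_nat]
  simp_rw [sum_range_weierstrassTerm]
  have := ((BohrMollerup.tendsto_log_gamma hx).add_const (log x)).add
    (tendsto_harmonic_sub_log.const_mul x)
  simpa [mul_comm] using this

lemma hasDerivAt_weierstrassTerm (m : ℕ) {x : ℝ} (hx : 0 < x + (m + 1)) :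
    HasDerivAt (weierstrassTerm m) ((m + 1 : ℝ)⁻¹ - (x + (m + 1))⁻¹) x := by
  have hlog := ((hasDerivAt_id' x).add_const (m + 1 : ℝ)).log hx.ne'
  exact (((hasDerivAt_id' x).div_const (m + 1 : ℝ)).sub (hlog.sub_const (log (m + 1)))).congr_deriv
    (by ring)

lemma abs_inv_sub_inv_add_le {c y A : ℝ} (hc : 0 < c) (hy : 0 ≤ y) (hyA : y ≤ A) :
    |c⁻¹ - (y + c)⁻¹| ≤ A * (c ^ 2)⁻¹ := by
  have hyc : 0 < y + c := by positivity
  have heq : c⁻¹ - (y + c)⁻¹ = y / (c * (y + c)) := by field_simp; ring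
  rw [heq, abs_of_nonneg (by positivity), ← div_eq_mul_inv, sq]
  exact div_le_div₀ (hy.trans hyA) hyA (by positivity)
    (mul_le_mul_of_nonneg_left (by linarith) hc.le)

lemma one_div_add_sq_le {c y : ℝ} (hc : 0 < c) (hy : 0 ≤ y) : 1 / (y + c) ^ 2 ≤ (c ^ 2)⁻¹ := by
  rw [one_div]
  exact inv_anti₀ (by positivity) (pow_le_pow_left₀ hc.le (by linarith) 2)

lemma hasDerivAt_log_Gamma {x : ℝ} (hx : 0 < x) :
    HasDerivAt (fun y => log (Gamma y))
      (-γ - x⁻¹ + ∑' m : ℕ, ((m + 1 : ℝ)⁻¹ - (x + (m + 1))⁻¹)) x := by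
  have hmem : x ∈ Set.Ioo 0 (x + 1) := ⟨hx, lt_add_one x⟩
  have hseries : HasDerivAt (fun y => ∑' m, weierstrassTerm m y)
      (∑' m : ℕ, ((m + 1 : ℝ)⁻¹ - (x + (m + 1))⁻¹)) x :=
    hasDerivAt_tsum_of_isPreconnected (summable_inv_nat_add_one_sq.mul_left (x + 1)) isOpen_Ioo
      isPreconnected_Ioo (fun m y hy => hasDerivAt_weierstrassTerm m (by linarith [hy.1]))
      (fun m y hy => abs_inv_sub_inv_add_le (by positivity) hy.1.le hy.2.le) hmem
      (summable_weierstrassTerm hx.le) hmem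
  have := (hseries.sub (hasDerivAt_log hx.ne')).sub ((hasDerivAt_id x).const_mul γ)
  refine (this.congr_of_eventuallyEq ?_).congr_deriv (by ring)
  filter_upwards [Ioi_mem_nhds hx] with y hy
  simp only [Pi.sub_apply, (hasSum_weierstrassTerm hy).tsum_eq, id]
  ring

lemma digamma_eq_tsum {x : ℝ} (hx : 0 < x) :
    digamma x = -γ - x⁻¹ + ∑' m : ℕ, ((m + 1 : ℝ)⁻¹ - (x + (m + 1))⁻¹) :=
  (hasDerivAt_log_Gamma hx).deriv

lemma tsum_one_div_add_nat_sq {x : ℝ} (hx : 0 < x) :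
    ∑' k : ℕ, 1 / (x + k) ^ 2 = 1 / x ^ 2 + ∑' k : ℕ, 1 / (x + (k + 1)) ^ 2 := by
  have hshift : Summable fun k : ℕ => 1 / (x + (k + 1)) ^ 2 :=
    summable_inv_nat_add_one_sq.of_nonneg_of_le (fun k => by positivity)
      fun k => one_div_add_sq_le (by positivity) hx.le
  rw [((summable_nat_add_iff 1).mp (by exact_mod_cast hshift)).tsum_eq_zero_add]
  push_cast
  simp

lemma hasDerivAt_digamma {x : ℝ} (hx : 0 < x) :
    HasDerivAt digamma (∑' k : ℕ, 1 / (x + k) ^ 2) x := by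
  have hterm (m : ℕ) {y : ℝ} (hy : 0 < y) :
      HasDerivAt (fun z : ℝ => (m + 1 : ℝ)⁻¹ - (z + (m + 1))⁻¹) (1 / (y + (m + 1)) ^ 2) y :=
    ((((hasDerivAt_id' y).add_const (m + 1 : ℝ)).inv (by positivity)).const_sub
      (m + 1 : ℝ)⁻¹).congr_deriv (by ring)
  have hseries : HasDerivAt (fun y : ℝ => ∑' m : ℕ, ((m + 1 : ℝ)⁻¹ - (y + (m + 1))⁻¹))
      (∑' m : ℕ, 1 / (x + (m + 1)) ^ 2) x :=
    hasDerivAt_tsum_of_isPreconnected summable_inv_nat_add_one_sq isOpen_Ioi isPreconnected_Ioi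
      (fun m y hy => hterm m hy)
      (fun m y hy => (norm_of_nonneg (by positivity)).trans_le
        (one_div_add_sq_le (by positivity) (le_of_lt hy)))
      hx (.of_norm_bounded (summable_inv_nat_add_one_sq.mul_left (x + 1))
        fun m => abs_inv_sub_inv_add_le (by positivity) hx.le (le_add_of_nonneg_right zero_le_one))
      hx
  have := ((hasDerivAt_inv hx.ne').const_sub (-γ)).add hseries
  rw [tsum_one_div_add_nat_sq hx]
  refine (this.congr_of_eventuallyEq ?_).congr_deriv (by simp)
  filter_upwards [Ioi_mem_nhds hx] with y hy
  exact digamma_eq_tsum hy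

lemma hasDerivAt_log_Gamma_digamma {x : ℝ} (hx : 0 < x) :
    HasDerivAt (fun y => log (Gamma y)) (digamma x) x :=
  (hasDerivAt_log_Gamma hx).differentiableAt.hasDerivAt

lemma digamma_add_one {x : ℝ} (hx : 0 < x) : digamma (x + 1) = digamma x + x⁻¹ := by
  have hshift : HasDerivAt (fun y => log (Gamma (y + 1))) (digamma (x + 1)) x :=
    (hasDerivAt_log_Gamma_digamma (by positivity)).comp_add_const x 1
  have hsplit : HasDerivAt (fun y => log (Gamma y) + log y) (digamma x + x⁻¹) x :=
    (hasDerivAt_log_Gamma_digamma hx).add (hasDerivAt_log hx.ne')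
  refine hshift.unique (hsplit.congr_of_eventuallyEq ?_)
  filter_upwards [Ioi_mem_nhds hx] with y hy
  rw [Gamma_add_one hy.out.ne', log_mul hy.out.ne' (Gamma_pos_of_pos hy).ne', add_comm]

lemma deriv_digamma {x : ℝ} (hx : 0 < x) : deriv digamma x = ∑' k : ℕ, 1 / (x + k) ^ 2 :=
  (hasDerivAt_digamma hx).deriv

lemma deriv_digamma_add_one {x : ℝ} (hx : 0 < x) :
    deriv digamma (x + 1) = deriv digamma x - 1 / x ^ 2 := by
  rw [deriv_digamma hx, deriv_digamma (by positivity), tsum_one_div_add_nat_sq hx]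
  simp only [add_assoc, add_comm (1 : ℝ), add_sub_cancel_left]

lemma sum_deriv_digamma_add_nat {x : ℝ} (hx : -1 < x) (p : ℕ) :
    ∑ i ∈ Icc 1 p, deriv digamma (x + i)
      = digamma (x + p + 1) - digamma (x + 1) - x * deriv digamma (x + 1)
        + (p + x) * deriv digamma (x + p + 1) := by
  induction p with
  | zero => simp
  | succ n ih =>
    have hpos : 0 < x + n + 1 := by linarith [n.cast_nonneg (α := ℝ)]
    rw [sum_Icc_succ_top (by omega), ih]
    push_cast
    rw [← add_assoc, digamma_add_one hpos, deriv_digamma_add_one hpos]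
    field_simp
    ring

lemma tsum_one_div_two_mul_add_sq {b : ℝ} (hb : 0 < b) (i : ℕ) :
    ∑' k : ℕ, 1 / (2 * ((i : ℝ) + k) + b) ^ 2 = deriv digamma (b / 2 + i) / 4 := by
  rw [deriv_digamma (by positivity), ← tsum_div_const]
  congr 1 with k
  field_simp
  ring

theorem double_sum_trigamma_general (b : ℝ) (hb : 0 < b) (p : ℕ) :
    ∑ i ∈ Finset.Icc 1 p, ∑' k : ℕ, 1 / (2 * ((i : ℝ) + (k : ℝ)) + b) ^ 2
      = (1 / 4) * digamma (b / 2 + p + 1) - (1 / 4) * digamma (b / 2 + 1)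
        - (b / 8) * deriv digamma (b / 2 + 1)
        + ((p : ℝ) / 4 + b / 8) * deriv digamma (b / 2 + p + 1) := by
  simp_rw [tsum_one_div_two_mul_add_sq hb, ← sum_div,
    sum_deriv_digamma_add_nat (by linarith : -1 < b / 2)]
  ring

/-- Closed form for the double sum `∑_{i=1}^p ∑_{j=i}^∞ 1/(2j+b)²` in terms of the
digamma function `ψ` and the trigamma function `ψ' = deriv digamma`. -/
theorem double_sum_trigamma (b : ℝ) (hb : 0 < b) (p : ℕ) (hp : 1 ≤ p) :
    ∑ i ∈ Finset.Icc 1 p, ∑' k : ℕ, 1 / (2 * ((i : ℝ) + (k : ℝ)) + b) ^ 2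
      = (1 / 4) * digamma (b / 2 + p + 1) - (1 / 4) * digamma (b / 2 + 1)
        - (b / 8) * deriv digamma (b / 2 + 1)
        + ((p : ℝ) / 4 + b / 8) * deriv digamma (b / 2 + p + 1) :=
  double_sum_trigamma_general b hb p
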